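/- arXiv:1607.02896 — 3 statements merged into one kernel-verified Lean document; each statement's English description precedes it below -/
import Mathlib

section
/- Let θ > 0, λ_n = n(θ + n − 1)/2, and consider the death process on the lattice Z_+^K that jumps from m to m − e_i at rate m_i(θ + |m| − 1)/2. Then its transition probability from m to m − i for 0 < i ≤ m factorizes as p_{m, m−i}(t) = C_{|m|, |m|−|i|}(t) · p(i; m, |i|), where C_{|m|,|m|−|i|}(t) is the one-dimensional death process transition probability from |m| to |m|−|i| with rates λ_n, and p(i; m, |i|) is the multivariate hypergeometric pmf. -/
/-!
The forward equations are triangular: besides `q n` itself, the equation for `q n` involves only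
the states `n + e j` of larger total mass. By downward induction on `|n|`, each step being the
linear ODE `y' = F - c y`, they have at most one solution vanishing off `{n ≤ m}` with given
initial values, and it remains to check that `C_{|m|, |m|-|n|}(t) · p(m - n; m, |m| - |n|)`
solves them. Up to the factor `(-1)^i ∏ λ`, `C_{N, N-i}` is the divided difference of
`y ↦ e^{-yt}` at the nodes `λ_N, …, λ_{N-i}`. Hence
`C'_{N, N-i-1} = λ_{N-i} C_{N, N-i} - λ_{N-i-1} C_{N, N-i-1}`, and `C_{N, N-i}(0) = 0` for
`i > 0` because divided differences of a constant vanish. The hypergeometric weights turn the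
inflow `∑ j (n j + 1) p(m - n - e j)` into `(|n| + 1) p(m - n)`, matching the one-dimensional
rate `λ_{|n|+1}`.
-/

open Finset Real

/-- Death rates `λ_n = n(θ+n-1)/2`. -/
noncomputable def lam (θ : ℝ) (n : ℕ) : ℝ := n * (θ + n - 1) / 2

/-- The coefficient `C_{n,n-i}(t)` of the one-dimensional death process. -/
noncomputable def deathC (θ : ℝ) (n i : ℕ) (t : ℝ) : ℝ :=
  (∏ h ∈ Finset.range i, lam θ (n - h)) * (-1 : ℝ) ^ i *
    ∑ k ∈ Finset.range (i + 1),
      Real.exp (-(lam θ (n - k)) * t) /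
        ∏ h ∈ (Finset.range (i + 1)).erase k, (lam θ (n - k) - lam θ (n - h))

/-- The multivariate hypergeometric pmf `p(i; m, |i|)`. -/
noncomputable def hypPMF {K : ℕ} (m i : Fin K → ℕ) : ℝ :=
  (∏ j, ((m j).choose (i j) : ℝ)) / ((∑ j, m j).choose (∑ j, i j) : ℝ)

theorem sum_one_div_prod_sub_eq_zero {ι F : Type*} [DecidableEq ι] [Field F] {s : Finset ι}
    {v : ι → F} (hvs : Set.InjOn v s) (hs : 2 ≤ #s) :
    ∑ i ∈ s, 1 / ∏ j ∈ s.erase i, (v i - v j) = 0 := by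
  have h := Lagrange.coeff_eq_sum hvs (P := 1) (by
    rw [Polynomial.degree_one]; exact_mod_cast (show 0 < #s by omega))
  rw [Polynomial.coeff_one, if_neg (by omega)] at h
  simpa using h.symm

theorem eq_of_hasDerivAt_sub_mul {f g F : ℝ → ℝ} {c : ℝ}
    (hf : ∀ t, HasDerivAt f (F t - c * f t) t) (hg : ∀ t, HasDerivAt g (F t - c * g t) t)
    (h0 : f 0 = g 0) : f = g :=
  ODE_solution_unique_univ (v := fun t y => F t - c * y) (s := fun _ => Set.univ)
    (fun t => ((LipschitzWith.const (F t)).sub (lipschitzWith_smul c)).lipschitzOnWith)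
    (fun t => ⟨hf t, trivial⟩) (fun t => ⟨hg t, trivial⟩) h0

noncomputable def expDivDiff (x : ℕ → ℝ) (i : ℕ) (t : ℝ) : ℝ :=
  ∑ k ∈ range (i + 1), exp (-x k * t) / ∏ h ∈ (range (i + 1)).erase k, (x k - x h)

theorem expDivDiff_zero (x : ℕ → ℝ) (t : ℝ) : expDivDiff x 0 t = exp (-x 0 * t) := by
  simp [expDivDiff]

theorem expDivDiff_apply_zero {x : ℕ → ℝ} {i : ℕ} (hx : Set.InjOn x (range (i + 1)))
    (hi : i ≠ 0) : expDivDiff x i 0 = 0 := by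
  simpa [expDivDiff] using sum_one_div_prod_sub_eq_zero hx (by simp; omega)

theorem hasDerivAt_expDivDiff (x : ℕ → ℝ) (i : ℕ) (t : ℝ) :
    HasDerivAt (expDivDiff x i) (∑ k ∈ range (i + 1),
      -x k * exp (-x k * t) / ∏ h ∈ (range (i + 1)).erase k, (x k - x h)) t := by
  refine HasDerivAt.fun_sum fun k _ => ?_
  exact (((hasDerivAt_id' t).const_mul (-x k)).exp.div_const _).congr_deriv (by ring)

theorem hasDerivAt_expDivDiff_succ {x : ℕ → ℝ} {i : ℕ} (hx : Set.InjOn x (range (i + 2)))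
    (t : ℝ) : HasDerivAt (expDivDiff x (i + 1))
      (-expDivDiff x i t - x (i + 1) * expDivDiff x (i + 1) t) t := by
  refine (hasDerivAt_expDivDiff x (i + 1) t).congr_deriv ?_
  -- the factor `x (i + 1) - x k` kills the last node and cancels from the weight of the others
  have hlower : ∀ k ∈ range (i + 1), (x (i + 1) - x k) * exp (-x k * t) /
      ∏ h ∈ (range (i + 2)).erase k, (x k - x h) =
        -(exp (-x k * t) / ∏ h ∈ (range (i + 1)).erase k, (x k - x h)) := by
    intro k hk
    rw [mem_range] at hk
    have hki : k ≠ i + 1 := by omega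
    have hne : x k - x (i + 1) ≠ 0 :=
      sub_ne_zero.2 (hx.ne (mem_range.2 (by omega)) (mem_range.2 (by omega)) hki)
    rw [range_add_one (n := i + 1), erase_insert_of_ne hki.symm, prod_insert (by simp),
      ← neg_sub, neg_mul, neg_div, mul_div_mul_left _ _ hne]
  simp only [expDivDiff]
  calc _ = ∑ k ∈ range (i + 2), (x (i + 1) - x k) * exp (-x k * t) /
          ∏ h ∈ (range (i + 2)).erase k, (x k - x h) -
        x (i + 1) * ∑ k ∈ range (i + 2),
          exp (-x k * t) / ∏ h ∈ (range (i + 2)).erase k, (x k - x h) := by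
        rw [mul_sum, ← sum_sub_distrib]
        exact sum_congr rfl fun k _ => by ring
    _ = _ := by
        rw [sum_range_succ _ (i + 1), sub_self, zero_mul, zero_div, add_zero, sum_congr rfl hlower,
          sum_neg_distrib]

theorem lam_strictMono {θ : ℝ} (hθ : 0 < θ) : StrictMono (lam θ) := by
  intro a b hab
  have hab' : (a : ℝ) < b := by exact_mod_cast hab
  have hb : (1 : ℝ) ≤ b := by exact_mod_cast (show 1 ≤ b by omega)
  unfold lam
  nlinarith [(Nat.cast_nonneg a : (0 : ℝ) ≤ a)]

theorem injOn_lam_sub {θ : ℝ} (hθ : 0 < θ) {n i : ℕ} (hi : i ≤ n) :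
    Set.InjOn (fun k => lam θ (n - k)) (range (i + 1)) := by
  intro a ha b hb hab
  have := (lam_strictMono hθ).injective hab
  rw [coe_range, Set.mem_Iio] at ha hb
  omega

theorem deathC_eq_expDivDiff (θ : ℝ) (n i : ℕ) (t : ℝ) :
    deathC θ n i t =
      (∏ h ∈ range i, lam θ (n - h)) * (-1) ^ i * expDivDiff (fun k => lam θ (n - k)) i t :=
  rfl

theorem deathC_zero (θ : ℝ) (n : ℕ) (t : ℝ) : deathC θ n 0 t = exp (-lam θ n * t) := by
  simp [deathC_eq_expDivDiff, expDivDiff_zero]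

theorem deathC_apply_zero {θ : ℝ} (hθ : 0 < θ) {n i : ℕ} (hi : i ≤ n) :
    deathC θ n i 0 = if i = 0 then 1 else 0 := by
  split_ifs with h
  · simp [h, deathC_zero]
  · rw [deathC_eq_expDivDiff, expDivDiff_apply_zero (injOn_lam_sub hθ hi) h, mul_zero]

theorem hasDerivAt_deathC_zero (θ : ℝ) (n : ℕ) (t : ℝ) :
    HasDerivAt (deathC θ n 0) (-lam θ n * deathC θ n 0 t) t := by
  simp only [funext (deathC_zero θ n)]
  exact ((hasDerivAt_id' t).const_mul _).exp.congr_deriv (by simp [mul_comm])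

theorem hasDerivAt_deathC_succ {θ : ℝ} (hθ : 0 < θ) {n i : ℕ} (hi : i + 1 ≤ n) (t : ℝ) :
    HasDerivAt (deathC θ n (i + 1))
      (lam θ (n - i) * deathC θ n i t - lam θ (n - (i + 1)) * deathC θ n (i + 1) t) t := by
  refine ((hasDerivAt_expDivDiff_succ (injOn_lam_sub hθ hi) t).const_mul
    ((∏ h ∈ range (i + 1), lam θ (n - h)) * (-1) ^ (i + 1))).congr_deriv ?_
  simp only [deathC_eq_expDivDiff, prod_range_succ, pow_succ]
  ring

theorem hasDerivAt_deathC_sub {θ : ℝ} (hθ : 0 < θ) {n s : ℕ} (hs : s < n) (t : ℝ) :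
    HasDerivAt (deathC θ n (n - s))
      (lam θ (s + 1) * deathC θ n (n - (s + 1)) t - lam θ s * deathC θ n (n - s) t) t := by
  have h := hasDerivAt_deathC_succ hθ (show n - (s + 1) + 1 ≤ n by omega) t
  rwa [show n - (s + 1) + 1 = n - s by omega, show n - (n - (s + 1)) = s + 1 by omega,
    show n - (n - s) = s by omega] at h

theorem Nat.succ_mul_choose_sub_succ {a b : ℕ} (h : a < b) :
    (a + 1) * b.choose (b - (a + 1)) = (b - a) * b.choose (b - a) := by
  rw [Nat.choose_symm h, Nat.choose_symm h.le, mul_comm, Nat.choose_succ_right_eq, mul_comm]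

section MultiIndex

variable {K : ℕ}

theorem sum_add_single (n : Fin K → ℕ) (j : Fin K) :
    ∑ k, (n + Pi.single j 1 : Fin K → ℕ) k = ∑ k, n k + 1 := by
  simp [sum_add_distrib]

theorem sum_sub_of_le {m n : Fin K → ℕ} (h : n ≤ m) :
    ∑ k, (m - n) k = ∑ k, m k - ∑ k, n k :=
  sum_tsub_distrib _ fun k _ => h k

theorem add_single_le_iff {m n : Fin K → ℕ} (h : n ≤ m) (j : Fin K) :
    n + Pi.single j 1 ≤ m ↔ n j < m j := by
  constructor
  · intro hle
    simpa using hle j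
  · intro hlt k
    by_cases hk : k = j
    · subst hk; simpa using hlt
    · simpa [hk] using h k

theorem succ_mul_prod_choose_sub_single {m n : Fin K → ℕ} {j : Fin K} (hj : n j < m j) :
    (n j + 1) * ∏ k, (m k).choose ((m - (n + Pi.single j 1) : Fin K → ℕ) k) =
      (m j - n j) * ∏ k, (m k).choose ((m - n) k) := by
  have hrest : ∏ k ∈ univ.erase j, (m k).choose ((m - (n + Pi.single j 1) : Fin K → ℕ) k) =
      ∏ k ∈ univ.erase j, (m k).choose ((m - n) k) :=
    prod_congr rfl fun k hk => by simp [ne_of_mem_erase hk]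
  rw [← mul_prod_erase _ _ (mem_univ j), ← mul_prod_erase _ _ (mem_univ j), hrest,
    ← mul_assoc, ← mul_assoc]
  simp only [Pi.sub_apply, Pi.add_apply, Pi.single_eq_same]
  rw [Nat.succ_mul_choose_sub_succ hj]

theorem succ_mul_hypPMF_sub_single {m n : Fin K → ℕ} (hnm : n ≤ m) (j : Fin K) :
    ((n j + 1 : ℕ) : ℝ) *
        (if n j < m j then hypPMF m (m - (n + Pi.single j 1)) else 0) =
      ((m j - n j : ℕ) : ℝ) * (∏ k, (m k).choose ((m - n) k) : ℕ) /
        ((∑ k, m k).choose (∑ k, m k - (∑ k, n k + 1)) : ℕ) := by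
  split_ifs with hj
  · rw [hypPMF, sum_sub_of_le ((add_single_le_iff hnm j).2 hj), sum_add_single, mul_div_assoc',
      ← Nat.cast_prod, ← Nat.cast_mul, succ_mul_prod_choose_sub_single hj, Nat.cast_mul]
  · simp [show m j - n j = 0 by omega]

theorem sum_succ_mul_hypPMF_sub_single {m n : Fin K → ℕ} (hnm : n ≤ m)
    (hlt : ∑ k, n k < ∑ k, m k) :
    ∑ j, ((n j + 1 : ℕ) : ℝ) *
        (if n j < m j then hypPMF m (m - (n + Pi.single j 1)) else 0) =
      ((∑ k, n k + 1 : ℕ) : ℝ) * hypPMF m (m - n) := by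
  have hchoose := Nat.succ_mul_choose_sub_succ hlt
  have hpos₁ : (0 : ℝ) < _ :=
    Nat.cast_pos.2 (Nat.choose_pos (Nat.sub_le (∑ k, m k) (∑ k, n k + 1)))
  have hpos₂ : (0 : ℝ) < _ :=
    Nat.cast_pos.2 (Nat.choose_pos (Nat.sub_le (∑ k, m k) (∑ k, n k)))
  simp only [succ_mul_hypPMF_sub_single hnm, ← sum_div, ← sum_mul]
  rw [← Nat.cast_sum, sum_tsub_distrib _ fun k _ => hnm k, hypPMF, ← Nat.cast_prod,
    sum_sub_of_le hnm, mul_div_assoc', div_eq_div_iff hpos₁.ne' hpos₂.ne']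
  norm_cast
  rw [mul_right_comm, ← hchoose]
  ring

theorem eq_of_forward_equations {m : Fin K → ℕ} {a : (Fin K → ℕ) → Fin K → ℝ}
    {c : (Fin K → ℕ) → ℝ} {p q : (Fin K → ℕ) → ℝ → ℝ}
    (hp : ∀ n t, HasDerivAt (p n) (∑ j, a n j * p (n + Pi.single j 1) t - c n * p n t) t)
    (hq : ∀ n t, HasDerivAt (q n) (∑ j, a n j * q (n + Pi.single j 1) t - c n * q n t) t)
    (hp_supp : ∀ n, ¬ n ≤ m → ∀ t, p n t = 0)
    (hq_supp : ∀ n, ¬ n ≤ m → ∀ t, q n t = 0)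
    (h0 : ∀ n, p n 0 = q n 0) : p = q := by
  suffices h : ∀ d n, ∑ k, m k - ∑ k, n k = d → p n = q n from funext fun n => h _ n rfl
  intro d
  induction d using Nat.strong_induction_on with
  | _ d ih =>
    intro n hd
    by_cases hnm : n ≤ m
    · have hinflow : ∀ j, p (n + Pi.single j 1) = q (n + Pi.single j 1) := by
        intro j
        by_cases hle : n + Pi.single j 1 ≤ m
        · have : ∑ k, (n + Pi.single j 1 : Fin K → ℕ) k ≤ ∑ k, m k :=
            sum_le_sum fun k _ => hle k
          rw [sum_add_single] at this
          exact ih (∑ k, m k - (∑ k, n k + 1)) (by omega) _ (by rw [sum_add_single])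
        · exact funext fun t => (hp_supp _ hle t).trans (hq_supp _ hle t).symm
      refine eq_of_hasDerivAt_sub_mul (hp n) (fun t => ?_) (h0 n)
      simpa only [hinflow] using hq n t
    · exact funext fun t => (hp_supp n hnm t).trans (hq_supp n hnm t).symm

open Classical in
noncomputable def deathTransition (θ : ℝ) (m n : Fin K → ℕ) (t : ℝ) : ℝ :=
  if n ≤ m then deathC θ (∑ k, m k) (∑ k, m k - ∑ k, n k) t * hypPMF m (m - n) else 0

theorem deathTransition_of_le {θ : ℝ} {m n : Fin K → ℕ} (h : n ≤ m) (t : ℝ) :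
    deathTransition θ m n t =
      deathC θ (∑ k, m k) (∑ k, m k - ∑ k, n k) t * hypPMF m (m - n) :=
  if_pos h

theorem deathTransition_of_not_le {θ : ℝ} {m n : Fin K → ℕ} (h : ¬ n ≤ m) (t : ℝ) :
    deathTransition θ m n t = 0 :=
  if_neg h

theorem deathTransition_sub {θ : ℝ} {m i : Fin K → ℕ} (h : i ≤ m) (t : ℝ) :
    deathTransition θ m (m - i) t = deathC θ (∑ k, m k) (∑ k, i k) t * hypPMF m i := by
  have hsum : ∑ k, m k - ∑ k, (m - i) k = ∑ k, i k := by
    rw [sum_sub_of_le h, Nat.sub_sub_self (sum_le_sum fun k _ => h k)]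
  rw [deathTransition_of_le tsub_le_self, hsum, tsub_tsub_cancel_of_le h]

theorem deathTransition_apply_zero {θ : ℝ} (hθ : 0 < θ) (m n : Fin K → ℕ) :
    deathTransition θ m n 0 = if n = m then 1 else 0 := by
  by_cases hnm : n ≤ m
  · have hsum : ∑ k, m k - ∑ k, n k = 0 ↔ n = m := by
      rw [tsub_eq_zero_iff_le, (sum_le_sum fun k _ => hnm k).ge_iff_eq,
        sum_eq_sum_iff_of_le fun k _ => hnm k]
      simp [funext_iff]
    rw [deathTransition_of_le hnm, deathC_apply_zero hθ tsub_le_self]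
    by_cases h : n = m
    · subst h
      simp [hypPMF]
    · rw [if_neg (mt hsum.1 h), if_neg h, zero_mul]
  · rw [deathTransition_of_not_le hnm, if_neg (by rintro rfl; exact hnm le_rfl)]

theorem hasDerivAt_deathTransition {θ : ℝ} (hθ : 0 < θ) (m n : Fin K → ℕ) (t : ℝ) :
    HasDerivAt (deathTransition θ m n)
      (∑ j, ((n j + 1 : ℕ) : ℝ) * (θ + (∑ k, n k)) / 2 *
          deathTransition θ m (n + Pi.single j 1) t -
        lam θ (∑ k, n k) * deathTransition θ m n t) t := by
  by_cases hnm : n ≤ m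
  swap
  · have hout : ∀ j, ¬ n + Pi.single j 1 ≤ m :=
      fun j h => hnm fun k => (Nat.le_add_right _ _).trans (h k)
    rw [funext (deathTransition_of_not_le (θ := θ) hnm)]
    simpa [deathTransition_of_not_le (hout _)] using hasDerivAt_const t (0 : ℝ)
  have hinflow : ∑ j, ((n j + 1 : ℕ) : ℝ) * (θ + (∑ k, n k)) / 2 *
      deathTransition θ m (n + Pi.single j 1) t =
        (θ + (∑ k, n k)) / 2 * deathC θ (∑ k, m k) (∑ k, m k - (∑ k, n k + 1)) t *
          ∑ j, ((n j + 1 : ℕ) : ℝ) *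
            (if n j < m j then hypPMF m (m - (n + Pi.single j 1)) else 0) := by
    rw [mul_sum]
    refine sum_congr rfl fun j _ => ?_
    by_cases hj : n j < m j
    · rw [deathTransition_of_le ((add_single_le_iff hnm j).2 hj), if_pos hj, sum_add_single]
      ring
    · rw [deathTransition_of_not_le (mt (add_single_le_iff hnm j).1 hj), if_neg hj]
      ring
  rw [hinflow, funext (deathTransition_of_le (θ := θ) hnm)]
  rcases (sum_le_sum fun k _ => hnm k : ∑ k, n k ≤ ∑ k, m k).lt_or_eq with hlt | heq
  · refine ((hasDerivAt_deathC_sub hθ hlt t).mul_const _).congr_deriv ?_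
    rw [sum_succ_mul_hypPMF_sub_single hnm hlt, lam, lam]
    push_cast
    ring
  · have htop : ∀ j, ¬ n j < m j := by
      have := (sum_eq_sum_iff_of_le fun k _ => hnm k).1 heq
      simp_all
    simp only [htop, if_false, mul_zero, sum_const_zero, zero_sub, heq, Nat.sub_self]
    exact ((hasDerivAt_deathC_zero θ _ t).mul_const _).congr_deriv (by ring)

end MultiIndex

/-- the transition probabilities of the death process on `ℤ₊^K`
jumping from `n` to `n - e_i` at rate `n_i(θ+|n|-1)/2`, characterized as the
solution of the Kolmogorov forward equations started at `m`, factorize as the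
one-dimensional death coefficient times the multivariate hypergeometric pmf. -/
theorem multidim_death_process_transition (θ : ℝ) (hθ : 0 < θ) {K : ℕ}
    (m : Fin K → ℕ) (q : (Fin K → ℕ) → ℝ → ℝ)
    (hinit : ∀ n, q n 0 = if n = m then 1 else 0)
    (hsupp : ∀ n, ¬ n ≤ m → ∀ t, q n t = 0)
    (hode : ∀ n t, HasDerivAt (q n)
      ((∑ j, ((n j + 1 : ℕ) : ℝ) * (θ + (∑ k, n k) + 1 - 1) / 2
          * q (n + fun k => if k = j then 1 else 0) t)
        - ((∑ k, n k : ℕ) : ℝ) * (θ + (∑ k, n k) - 1) / 2 * q n t) t) :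
    ∀ i : Fin K → ℕ, 0 < i → i ≤ m → ∀ t, 0 ≤ t →
      q (m - i) t = deathC θ (∑ j, m j) (∑ j, i j) t * hypPMF m i := by
  intro i _ him t _
  have hforward : ∀ n t, HasDerivAt (q n) (∑ j, ((n j + 1 : ℕ) : ℝ) * (θ + (∑ k, n k)) / 2 *
      q (n + Pi.single j 1) t - lam θ (∑ k, n k) * q n t) t := fun n t => by
    have h := hode n t
    simp only [add_sub_cancel_right, ← Pi.single_apply] at h
    exact h
  have hq : q = deathTransition θ m :=
    eq_of_forward_equations hforward (hasDerivAt_deathTransition hθ m) hsupp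
      (fun n hn => deathTransition_of_not_le hn)
      (fun n => by rw [hinit, deathTransition_apply_zero hθ])
  rw [hq, deathTransition_sub him]
end

section
/- Let K ≥ 2, α = (α_1,...,α_K) with α_i > 0, θ = Σ α_i, and let L_WF be the Wright–Fisher generator on the simplex Δ_K: (L_WF f)(x) = (1/2) Σ_{i,j} x_i(δ_{ij} − x_j) ∂²f/∂x_i∂x_j + (1/2) Σ_i (α_i − θ x_i) ∂f/∂x_i. Define h(x, m) = (Γ(θ+|m|)/Γ(θ)) ∏_i (Γ(α_i)/Γ(α_i+m_i)) x^m for m ∈ Z_+^K. Then (L_WF h(·, m))(x) = ((θ+|m|−1)/2) Σ_{i=1}^K m_i h(x, m−e_i) − (|m|(θ+|m|−1)/2) h(x, m) for all x in the interior of the simplex. -/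
/-!
By Euler's relation `x_i ∂_i x^m = m_i x^m`, the generator maps a monomial to
`L_WF x^m = ½ Σ_i m_i (α_i + m_i - 1) x^(m - e_i) - ½ |m| (θ + |m| - 1) x^m`.
The Gamma normalisation of `h` is the one for which `Γ(s + 1) = s Γ(s)` turns the factor
`α_i + m_i - 1` into `θ + |m| - 1`, i.e. `(θ + |m| - 1) c(m - e_i) = (α_i + m_i - 1) c(m)`.
-/

open Finset Real

/-- The Wright–Fisher duality function
`h(x,m) = (Γ(θ+|m|)/Γ(θ)) ∏_i (Γ(α_i)/Γ(α_i+m_i)) x^m`, with `θ = Σ α_i`. -/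
noncomputable def hWF {K : ℕ} (α : Fin K → ℝ) (x : Fin K → ℝ) (m : Fin K → ℕ) : ℝ :=
  (Real.Gamma ((∑ i, α i) + ∑ i, (m i : ℝ)) / Real.Gamma (∑ i, α i)) *
    (∏ i, Real.Gamma (α i) / Real.Gamma (α i + m i)) * ∏ i, x i ^ m i

/-- First partial derivative in the `i`-th coordinate. -/
noncomputable def pd {K : ℕ} (f : (Fin K → ℝ) → ℝ) (i : Fin K) (x : Fin K → ℝ) : ℝ :=
  deriv (fun s => f (Function.update x i s)) (x i)

namespace WrightFisher

section Multiindex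

variable {ι : Type*}

lemma sub_single_add_single [DecidableEq ι] {m : ι → ℕ} {i : ι} (h : m i ≠ 0) :
    m - Pi.single i 1 + Pi.single i 1 = m := by
  refine tsub_add_cancel_of_le fun k => ?_
  by_cases hk : k = i
  · subst hk
    simpa [Nat.one_le_iff_ne_zero] using h
  · simp [hk]

lemma mul_cast_sub_single_apply [DecidableEq ι] (m : ι → ℕ) (i j : ι) :
    (m i : ℝ) * ((m - Pi.single i 1 : ι → ℕ) j : ℝ) = m i * (m j - (Pi.single i 1 : ι → ℝ) j) := by
  rcases Nat.eq_zero_or_pos (m i) with h | h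
  · simp [h]
  · by_cases hj : j = i
    · subst hj
      simp [Nat.cast_sub h]
    · simp [hj]

lemma sum_cast_add_single [Fintype ι] [DecidableEq ι] (n : ι → ℕ) (i : ι) :
    ∑ k, ((n + Pi.single i 1 : ι → ℕ) k : ℝ) = (∑ k, (n k : ℝ)) + 1 := by
  simp [sum_add_distrib, Pi.single_apply]

noncomputable def monomial [Fintype ι] (m : ι → ℕ) (x : ι → ℝ) : ℝ := ∏ k, x k ^ m k

lemma monomial_add [Fintype ι] (m n : ι → ℕ) (x : ι → ℝ) :
    monomial (m + n) x = monomial m x * monomial n x := by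
  simp only [monomial, Pi.add_apply, pow_add, prod_mul_distrib]

lemma monomial_single_one [Fintype ι] [DecidableEq ι] (i : ι) (x : ι → ℝ) :
    monomial (Pi.single i 1) x = x i := by
  rw [monomial, prod_eq_single i (fun k _ hk => by simp [hk]) (by simp)]
  simp

lemma mul_monomial_sub_single [Fintype ι] [DecidableEq ι] (m : ι → ℕ) (i : ι) (x : ι → ℝ) :
    (m i : ℝ) * (x i * monomial (m - Pi.single i 1) x) = m i * monomial m x := by
  rcases eq_or_ne (m i) 0 with h | h
  · simp [h]
  · congr 1
    rw [← monomial_single_one i x, mul_comm, ← monomial_add, sub_single_add_single h]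

lemma monomial_update [Fintype ι] [DecidableEq ι] (m : ι → ℕ) (x : ι → ℝ) (i : ι) (s : ℝ) :
    monomial m (Function.update x i s) = s ^ m i * ∏ k ∈ univ \ {i}, x k ^ m k := by
  simp only [monomial, Function.apply_update (fun k y => y ^ m k) x i s]
  exact prod_update_of_mem (mem_univ i) _ _

end Multiindex

section DualityCoeff

variable {ι : Type*} [Fintype ι] [DecidableEq ι]

noncomputable def dualityCoeff (α : ι → ℝ) (m : ι → ℕ) : ℝ :=
  (Real.Gamma ((∑ i, α i) + ∑ i, (m i : ℝ)) / Real.Gamma (∑ i, α i)) *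
    ∏ i, Real.Gamma (α i) / Real.Gamma (α i + m i)

lemma dualityCoeff_add_single {α : ι → ℝ} (hα : ∀ i, 0 < α i) (n : ι → ℕ) (i : ι) :
    ((∑ k, α k) + ∑ k, (n k : ℝ)) * dualityCoeff α n
      = (α i + n i) * dualityCoeff α (n + Pi.single i 1) := by
  have hθ : 0 < ∑ k, α k := (hα i).trans_le (single_le_sum (fun k _ => (hα k).le) (mem_univ i))
  have hθn : 0 < (∑ k, α k) + ∑ k, (n k : ℝ) := by positivity
  have hαn : 0 < α i + n i := by have := hα i; positivity
  have hrest : ∏ k ∈ {i}ᶜ, Real.Gamma (α k) / Real.Gamma (α k + (n + Pi.single i 1 : ι → ℕ) k)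
      = ∏ k ∈ {i}ᶜ, Real.Gamma (α k) / Real.Gamma (α k + n k) :=
    prod_congr rfl fun k hk => by
      rw [Pi.add_apply, Pi.single_eq_of_ne (by simpa using hk), add_zero]
  simp only [dualityCoeff, sum_cast_add_single, Fintype.prod_eq_mul_prod_compl i, hrest]
  rw [Pi.add_apply, Pi.single_eq_same, Nat.cast_add_one, ← add_assoc, ← add_assoc,
    Real.Gamma_add_one hθn.ne', Real.Gamma_add_one hαn.ne']
  field_simp

lemma mul_dualityCoeff_sub_single {α : ι → ℝ} (hα : ∀ i, 0 < α i) (m : ι → ℕ) (i : ι) :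
    (m i : ℝ) * (((∑ k, α k) + ∑ k, (m k : ℝ) - 1) * dualityCoeff α (m - Pi.single i 1))
      = m i * ((α i + m i - 1) * dualityCoeff α m) := by
  rcases eq_or_ne (m i) 0 with h | h
  · simp [h]
  obtain ⟨n, rfl⟩ : ∃ n : ι → ℕ, m = n + Pi.single i 1 := ⟨_, (sub_single_add_single h).symm⟩
  rw [add_tsub_cancel_right, sum_cast_add_single, Pi.add_apply, Pi.single_eq_same,
    Nat.cast_add_one]
  linear_combination ((n i : ℝ) + 1) * dualityCoeff_add_single hα n i

end DualityCoeff

section Generator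

variable {K : ℕ}

lemma pd_const_mul (c : ℝ) (f : (Fin K → ℝ) → ℝ) (i : Fin K) :
    pd (fun y => c * f y) i = fun x => c * pd f i x := by
  funext x
  exact congrFun (deriv_const_mul_field' c) (x i)

lemma pd_monomial (m : Fin K → ℕ) (i : Fin K) (x : Fin K → ℝ) :
    pd (monomial m) i x = m i * monomial (m - Pi.single i 1) x := by
  have hrest : ∏ k ∈ univ \ {i}, x k ^ (m - Pi.single i 1 : Fin K → ℕ) k
      = ∏ k ∈ univ \ {i}, x k ^ m k :=
    prod_congr rfl fun k hk => by
      rw [Pi.sub_apply, Pi.single_eq_of_ne (by simpa using hk), Nat.sub_zero]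
  simp only [pd, monomial_update]
  conv_rhs => rw [← Function.update_eq_self i x, monomial_update, hrest]
  rw [deriv_mul_const_field, deriv_pow_field]
  simp [mul_assoc]

lemma mul_pd_monomial (m : Fin K → ℕ) (i : Fin K) (x : Fin K → ℝ) :
    x i * pd (monomial m) i x = m i * monomial m x := by
  rw [pd_monomial, mul_left_comm, mul_monomial_sub_single]

lemma sum_mul_pd_monomial (m : Fin K → ℕ) (x : Fin K → ℝ) :
    ∑ i, x i * pd (monomial m) i x = (∑ i, (m i : ℝ)) * monomial m x := by
  simp only [mul_pd_monomial, sum_mul]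

noncomputable def generator (α : Fin K → ℝ) (f : (Fin K → ℝ) → ℝ) (x : Fin K → ℝ) : ℝ :=
  (1 / 2) * ∑ i, ∑ j, x i * ((if i = j then 1 else 0) - x j) * pd (pd f i) j x
    + (1 / 2) * ∑ i, (α i - (∑ k, α k) * x i) * pd f i x

lemma generator_const_mul (α : Fin K → ℝ) (c : ℝ) (f : (Fin K → ℝ) → ℝ) (x : Fin K → ℝ) :
    generator α (fun y => c * f y) x = c * generator α f x := by
  simp only [generator, pd_const_mul, mul_add, mul_sum]
  congr 1
  · exact sum_congr rfl fun i _ => sum_congr rfl fun j _ => by ring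
  · exact sum_congr rfl fun i _ => by ring

lemma generator_monomial (α : Fin K → ℝ) (m : Fin K → ℕ) (x : Fin K → ℝ) :
    generator α (monomial m) x
      = (1 / 2) * ∑ i, (m i : ℝ) * (α i + m i - 1) * monomial (m - Pi.single i 1) x
        - (1 / 2) * ((∑ k, (m k : ℝ)) * ((∑ k, α k) + ∑ k, (m k : ℝ) - 1)) * monomial m x := by
  have hpd : ∀ i, pd (monomial m) i = fun y => m i * monomial (m - Pi.single i 1) y :=
    fun i => funext (pd_monomial m i)
  have hdiffusion : ∀ i, ∑ j, x i * ((if i = j then 1 else 0) - x j) * pd (pd (monomial m) i) j x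
      = m i * (m i - 1) * monomial (m - Pi.single i 1) x
        - m i * ((∑ k, (m k : ℝ)) - 1) * monomial m x := by
    intro i
    have hself := mul_cast_sub_single_apply m i i
    rw [Pi.single_eq_same] at hself
    have htotal : (m i : ℝ) * ∑ j, ((m - Pi.single i 1 : Fin K → ℕ) j : ℝ)
        = m i * ((∑ k, (m k : ℝ)) - 1) := by
      simp only [mul_sum, mul_cast_sub_single_apply]
      rw [← mul_sum, sum_sub_distrib, Fintype.sum_pi_single']
    calc _ = m i * (x i * pd (monomial (m - Pi.single i 1)) i x)
          - m i * x i * ∑ j, x j * pd (monomial (m - Pi.single i 1)) j x := by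
          simp only [hpd, pd_const_mul, mul_sub, sub_mul, sum_sub_distrib, mul_sum]
          congr 1
          · simp only [mul_ite, ite_mul, mul_one, mul_zero, zero_mul, sum_ite_eq,
              if_pos (mem_univ i)]
            ring
          · exact sum_congr rfl fun j _ => by ring
      _ = _ := by
          rw [mul_pd_monomial, sum_mul_pd_monomial]
          linear_combination monomial (m - Pi.single i 1) x * hself
            - x i * monomial (m - Pi.single i 1) x * htotal
            - ((∑ k, (m k : ℝ)) - 1) * mul_monomial_sub_single m i x
  have hdrift : ∀ i, (α i - (∑ k, α k) * x i) * pd (monomial m) i x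
      = α i * m i * monomial (m - Pi.single i 1) x - (∑ k, α k) * (m i * monomial m x) := by
    intro i
    rw [← mul_pd_monomial, pd_monomial]
    ring
  have hterm : ∀ i, ∑ j, x i * ((if i = j then 1 else 0) - x j) * pd (pd (monomial m) i) j x
      + (α i - (∑ k, α k) * x i) * pd (monomial m) i x
      = m i * (α i + m i - 1) * monomial (m - Pi.single i 1) x
        - m i * ((∑ k, α k) + (∑ k, (m k : ℝ)) - 1) * monomial m x := by
    intro i
    rw [hdiffusion, hdrift]
    ring
  rw [generator, ← mul_add, ← sum_add_distrib, sum_congr rfl fun i _ => hterm i,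
    sum_sub_distrib, ← sum_mul, ← sum_mul]
  ring

end Generator

end WrightFisher

theorem WF_generator_duality_general {K : ℕ} (α : Fin K → ℝ)
    (hα : ∀ i, 0 < α i) (m : Fin K → ℕ) (x : Fin K → ℝ) :
    (1 / 2) * ∑ i, ∑ j, x i * ((if i = j then 1 else 0) - x j)
        * pd (pd (hWF α · m) i) j x
      + (1 / 2) * ∑ i, (α i - (∑ k, α k) * x i) * pd (hWF α · m) i x
    = (((∑ k, α k) + (∑ k, (m k : ℝ)) - 1) / 2) *
        ∑ i, (m i : ℝ) * hWF α x (m - fun k => if k = i then 1 else 0)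
      - ((∑ k, (m k : ℝ)) * ((∑ k, α k) + (∑ k, (m k : ℝ)) - 1) / 2) * hWF α x m := by
  open WrightFisher in
  have hsingle : ∀ i : Fin K, (fun k => if k = i then 1 else 0) = (Pi.single i 1 : Fin K → ℕ) :=
    fun i => funext fun k => (Pi.single_apply i 1 k).symm
  have hdeath : ((∑ k, α k) + (∑ k, (m k : ℝ)) - 1) * ∑ i, (m i : ℝ) * hWF α x (m - Pi.single i 1)
      = dualityCoeff α m * ∑ i, (m i : ℝ) * (α i + m i - 1) * monomial (m - Pi.single i 1) x := by
    simp only [mul_sum]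
    refine sum_congr rfl fun i _ => ?_
    change _ * (_ * (dualityCoeff α _ * monomial _ x)) = _
    linear_combination monomial (m - Pi.single i 1) x * mul_dualityCoeff_sub_single hα m i
  change generator α (fun y => dualityCoeff α m * monomial m y) x = _
  simp only [hsingle]
  rw [generator_const_mul, generator_monomial]
  change _ = _ * _ - _ * (dualityCoeff α m * monomial m x)
  linear_combination -(1 / 2) * hdeath

/-- the Wright–Fisher generator applied to `h(·,m)` satisfies the
death-process duality identity on the interior of the simplex. -/
theorem WF_generator_duality {K : ℕ} (hK : 2 ≤ K) (α : Fin K → ℝ)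
    (hα : ∀ i, 0 < α i) (m : Fin K → ℕ) (x : Fin K → ℝ)
    (hx : ∀ i, 0 < x i) (hsum : ∑ i, x i = 1) :
    (1 / 2) * ∑ i, ∑ j, x i * ((if i = j then 1 else 0) - x j)
        * pd (pd (hWF α · m) i) j x
      + (1 / 2) * ∑ i, (α i - (∑ k, α k) * x i) * pd (hWF α · m) i x
    = (((∑ k, α k) + (∑ k, (m k : ℝ)) - 1) / 2) *
        ∑ i, (m i : ℝ) * hWF α x (m - fun k => if k = i then 1 else 0)
      - ((∑ k, (m k : ℝ)) * ((∑ k, α k) + (∑ k, (m k : ℝ)) - 1) / 2) * hWF α x m :=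
  WF_generator_duality_general α hα m x
end

section
/- Let L_i be the CIR generator (L_i f)(z) = (1/2)(α_i − β z) f'(z) + (1/2) z f''(z) with α_i, β > 0, and define h_i(z, m, s) = (Γ(α_i)/Γ(α_i+m)) ((β+s)/β)^{α_i} (β+s)^m z^m e^{−s z} for m ∈ Z_+, s ≥ 0, z > 0. Then (L_i h_i(·, m, s))(z) = (m/2)(β+s) h_i(z, m−1, s) + (s/2)(α_i+m) h_i(z, m+1, s) − (1/2)(s(α_i+m) + m(β+s)) h_i(z, m, s). -/
/-!
Write `h(z,m,s) = c_m · z^m e^{-sz}`. Differentiating the monomial-exponential twice shows that the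
generator maps `z^m e^{-sz}` into the span of `z^{m-1} e^{-sz}`, `z^m e^{-sz}`, `z^{m+1} e^{-sz}`,
and the Gamma recurrence `Γ(α+m+1) = (α+m) Γ(α+m)` converts the coefficients `c_{m±1}` back to `c_m`.
-/

open Real

/-- The CIR duality function
`h(z,m,s) = (Γ(α)/Γ(α+m)) ((β+s)/β)^α (β+s)^m z^m e^{-sz}`. -/
noncomputable def hCIR (α β : ℝ) (z : ℝ) (m : ℕ) (s : ℝ) : ℝ :=
  (Real.Gamma α / Real.Gamma (α + m)) * ((β + s) / β) ^ α *
    (β + s) ^ m * z ^ m * Real.exp (-s * z)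

noncomputable section

def cirGenerator (α β : ℝ) (f : ℝ → ℝ) (z : ℝ) : ℝ :=
  1 / 2 * (α - β * z) * deriv f z + 1 / 2 * z * deriv (deriv f) z

def powExp (s : ℝ) (m : ℕ) (w : ℝ) : ℝ := w ^ m * exp (-s * w)

def cirCoeff (α β s : ℝ) (m : ℕ) : ℝ :=
  Gamma α / Gamma (α + m) * ((β + s) / β) ^ α * (β + s) ^ m

end

lemma cirGenerator_const_mul (α β c : ℝ) (f : ℝ → ℝ) (z : ℝ) :
    cirGenerator α β (fun w => c * f w) z = c * cirGenerator α β f z := by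
  simp only [cirGenerator, deriv_const_mul_field']
  ring

lemma hasDerivAt_powExp (s : ℝ) (m : ℕ) (w : ℝ) :
    HasDerivAt (powExp s m) (m * powExp s (m - 1) w - s * powExp s m w) w := by
  have hexp : HasDerivAt (fun w => exp (-s * w)) (exp (-s * w) * -s) w :=
    ((hasDerivAt_id w).const_mul (-s)).exp.congr_deriv (by simp)
  refine ((hasDerivAt_pow m w).mul hexp).congr_deriv ?_
  simp only [powExp]
  ring

lemma deriv_powExp (s : ℝ) (m : ℕ) :
    deriv (powExp s m) = fun w => m * powExp s (m - 1) w - s * powExp s m w :=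
  funext fun w => (hasDerivAt_powExp s m w).deriv

lemma deriv_deriv_powExp (s : ℝ) (m : ℕ) (w : ℝ) :
    deriv (deriv (powExp s m)) w =
      m * (((m - 1 : ℕ) : ℝ) * powExp s (m - 1 - 1) w - s * powExp s (m - 1) w)
        - s * (m * powExp s (m - 1) w - s * powExp s m w) := by
  rw [deriv_powExp]
  exact (((hasDerivAt_powExp s (m - 1) w).const_mul _).sub
    ((hasDerivAt_powExp s m w).const_mul s)).deriv

lemma mul_powExp_succ (s z : ℝ) (m : ℕ) : z * powExp s m z = powExp s (m + 1) z := by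
  simp only [powExp, pow_succ]
  ring

/-- The truncated `m - 1` is harmless because of the factor `m`. -/
lemma natCast_mul_mul_powExp_pred (s z : ℝ) (m : ℕ) :
    (m : ℝ) * (z * powExp s (m - 1) z) = m * powExp s m z := by
  cases m with
  | zero => simp
  | succ k => rw [Nat.add_sub_cancel, mul_powExp_succ]

lemma cirGenerator_powExp (α β s z : ℝ) (m : ℕ) :
    cirGenerator α β (powExp s m) z =
      1 / 2 * (m * (α + m - 1) * powExp s (m - 1) z + s * (β + s) * powExp s (m + 1) z
        - (s * α + 2 * s * m + β * m) * powExp s m z) := by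
  have hpred := natCast_mul_mul_powExp_pred s z m
  have hpred2 := natCast_mul_mul_powExp_pred s z (m - 1)
  have hcast : (m : ℝ) * ((m - 1 : ℕ) : ℝ) = m * (m - 1) := by
    cases m <;> simp
  have hsucc := mul_powExp_succ s z m
  rw [cirGenerator, deriv_deriv_powExp, deriv_powExp]
  linear_combination (-(1 / 2) * β - s) * hpred + 1 / 2 * (m : ℝ) * hpred2
    + 1 / 2 * powExp s (m - 1) z * hcast + (1 / 2 * β * s + 1 / 2 * s ^ 2) * hsucc

lemma hCIR_eq_cirCoeff_mul_powExp (α β z s : ℝ) (m : ℕ) :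
    hCIR α β z m s = cirCoeff α β s m * powExp s m z := by
  simp only [hCIR, cirCoeff, powExp]
  ring

lemma add_mul_cirCoeff_succ {α : ℝ} (β s : ℝ) {m : ℕ} (h : α + m ≠ 0) :
    (α + m) * cirCoeff α β s (m + 1) = (β + s) * cirCoeff α β s m := by
  simp only [cirCoeff]
  rw [Nat.cast_succ, ← add_assoc, Gamma_add_one h, pow_succ]
  field_simp

lemma natCast_mul_cirCoeff_pred {α : ℝ} (hα : 0 < α) (β s : ℝ) (m : ℕ) :
    (m : ℝ) * ((β + s) * cirCoeff α β s (m - 1)) = m * (α + m - 1) * cirCoeff α β s m := by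
  cases m with
  | zero => simp
  | succ k =>
    rw [Nat.add_sub_cancel, ← add_mul_cirCoeff_succ β s (by positivity)]
    push_cast
    ring

theorem CIR_generator_duality_general (α β : ℝ) (hα : 0 < α)
    (m : ℕ) (s : ℝ) (z : ℝ) :
    (1 / 2) * (α - β * z) * deriv (fun w => hCIR α β w m s) z
      + (1 / 2) * z * deriv (deriv (fun w => hCIR α β w m s)) z
    = (m / 2) * (β + s) * hCIR α β z (m - 1) s
      + (s / 2) * (α + m) * hCIR α β z (m + 1) s
      - (1 / 2) * (s * (α + m) + m * (β + s)) * hCIR α β z m s := by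
  have hfun : (fun w => hCIR α β w m s) = fun w => cirCoeff α β s m * powExp s m w :=
    funext fun w => hCIR_eq_cirCoeff_mul_powExp α β w s m
  change cirGenerator α β (fun w => hCIR α β w m s) z = _
  rw [hfun, cirGenerator_const_mul, cirGenerator_powExp]
  simp only [hCIR_eq_cirCoeff_mul_powExp]
  linear_combination
    -(1 / 2 * powExp s (m - 1) z) * natCast_mul_cirCoeff_pred hα β s m
      - (1 / 2 * s * powExp s (m + 1) z) * add_mul_cirCoeff_succ β s (m := m) (by positivity)

/-- the CIR generator applied to `h(·,m,s)` satisfies the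
duality identity. -/
theorem CIR_generator_duality (α β : ℝ) (hα : 0 < α) (hβ : 0 < β)
    (m : ℕ) (s : ℝ) (hs : 0 ≤ s) (z : ℝ) (hz : 0 < z) :
    (1 / 2) * (α - β * z) * deriv (fun w => hCIR α β w m s) z
      + (1 / 2) * z * deriv (deriv (fun w => hCIR α β w m s)) z
    = (m / 2) * (β + s) * hCIR α β z (m - 1) s
      + (s / 2) * (α + m) * hCIR α β z (m + 1) s
      - (1 / 2) * (s * (α + m) + m * (β + s)) * hCIR α β z m s :=
  CIR_generator_duality_general α β hα m s z
end
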